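/- Let w: ℝ → [0,∞) be integrable with ∫_ℝ w(p) dp = 1, and suppose N(p) := ∑_{n∈ℤ} w(p−n) satisfies 0 < N(p) < ∞ for every p. Let a be the 2π-periodic sawtooth function with a(q) = q on [0,2π), and set w_{m,n} := ∫_ℝ √(w(p−m) w(p−n)) dp. Then the matrix elements of the coherent-state quantisation A_a of a are: ∫_ℝ ∫₀^{2π} a(q) · ⟨e_m|p,q⟩ · conj(⟨e_n|p,q⟩) · N(p) dp dq/(2π) = π δ_{mn} + (1 − δ_{mn}) · i w_{m,n}/(m−n); moreover by the Cauchy–Schwarz inequality w_{m,n} ≤ 1 for all m, n ∈ ℤ, so A_a is a bounded self-adjoint operator. -/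

import Mathlib

open Real MeasureTheory

/-- `N(p) = ∑_{n∈ℤ} w(p−n)`. -/
noncomputable def Nw (w : ℝ → ℝ) (p : ℝ) : ℝ := ∑' n : ℤ, w (p - n)

/-- The components of the circle coherent state:
`⟨e_n|p,q⟩ = N(p)^{−1/2} √(w(p−n)) e^{−inq}`. -/
noncomputable def csC (w : ℝ → ℝ) (p q : ℝ) (n : ℤ) : ℂ :=
  ((Real.sqrt (Nw w p))⁻¹ * Real.sqrt (w (p - n)) : ℝ) *
    Complex.exp (-Complex.I * n * q)

/-- The 2π-periodic sawtooth (angle) function `a(q) = q` for `q ∈ [0, 2π)`. -/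
noncomputable def saw (q : ℝ) : ℝ := q - 2 * π * (⌊q / (2 * π)⌋ : ℝ)

/-- The overlap matrix `w_{m,n} = ∫_ℝ √(w(p−m) w(p−n)) dp`. -/
noncomputable def wOv (w : ℝ → ℝ) (m n : ℤ) : ℝ :=
  ∫ p : ℝ, Real.sqrt (w (p - m) * w (p - n))

/-!
Multiplying `⟨e_m|p,q⟩ · conj ⟨e_n|p,q⟩` by `N(p)` cancels the normalisation and leaves
`√(w(p−m) w(p−n)) e^{−i(m−n)q}`, so the `q`-integral is a Fourier coefficient of the sawtooth,
which agrees with `q` almost everywhere on `[0, 2π]`: it is `π` for `m = n` and, by integration by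
parts with `e^{−ik·2π} = 1`, `i/(m−n)` otherwise. Integrating in `p` then gives `w_{m,n}`, which is
`∫ w = 1` on the diagonal and at most `(∫ w(·−m) + ∫ w(·−n))/2 = 1` by AM–GM.
-/

theorem saw_of_mem_Ico {q : ℝ} (hq : q ∈ Set.Ico 0 (2 * π)) : saw q = q := by
  have hfloor : ⌊q / (2 * π)⌋ = 0 := by
    rw [Int.floor_eq_zero_iff]
    exact ⟨by have := hq.1; positivity, (div_lt_one (by positivity)).2 hq.2⟩
  simp [saw, hfloor]

theorem cexp_neg_I_mul_intCast_mul_two_pi (k : ℤ) :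
    Complex.exp (-Complex.I * k * (2 * π : ℝ)) = 1 := by
  rw [← Complex.exp_int_mul_two_pi_mul_I (-k)]
  push_cast
  ring_nf

theorem integral_ofReal_mul_cexp_neg_I_mul_intCast {k : ℤ} (hk : k ≠ 0) :
    ∫ q in (0 : ℝ)..(2 * π), (q : ℂ) * Complex.exp (-Complex.I * k * q) =
      2 * π * Complex.I / k := by
  set c : ℂ := -Complex.I * k with hc
  have hc0 : c ≠ 0 := by simp [hc, hk]
  have hu : ∀ x : ℝ, HasDerivAt (fun y : ℝ => (y : ℂ)) 1 x := fun x =>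
    (hasDerivAt_id x).ofReal_comp
  have hv : ∀ x : ℝ,
      HasDerivAt (fun y : ℝ => Complex.exp (c * y) / c) (Complex.exp (c * x)) x := fun x => by
    simpa [hc0] using (((hasDerivAt_id (x : ℂ)).const_mul c).cexp.div_const c).comp_ofReal
  rw [intervalIntegral.integral_mul_deriv_eq_deriv_mul (fun x _ => hu x) (fun x _ => hv x)
    intervalIntegrable_const ((by fun_prop : Continuous _).intervalIntegrable _ _)]
  have hexp : Complex.exp (c * (2 * π : ℝ)) = 1 := cexp_neg_I_mul_intCast_mul_two_pi k
  simp only [one_mul, intervalIntegral.integral_div, integral_exp_mul_complex hc0, hexp]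
  field_simp
  simp only [hc, Complex.ofReal_zero, mul_zero, Complex.exp_zero, zero_mul, sub_zero, sub_self]
  push_cast
  linear_combination (-2 * π * k ^ 2 * Complex.I) * Complex.I_sq

theorem integral_saw_mul_cexp_neg_I_mul_intCast (k : ℤ) :
    ∫ q in (0 : ℝ)..(2 * π), (saw q : ℂ) * Complex.exp (-Complex.I * k * q) =
      if k = 0 then 2 * (π : ℂ) ^ 2 else 2 * π * Complex.I / k := by
  have hsaw : ∀ᵐ q : ℝ, q ∈ Set.uIoc 0 (2 * π) →
      (saw q : ℂ) * Complex.exp (-Complex.I * k * q) = q * Complex.exp (-Complex.I * k * q) := by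
    filter_upwards [Measure.ae_ne volume (2 * π)] with q hq hmem
    rw [Set.uIoc_of_le (by positivity)] at hmem
    rw [saw_of_mem_Ico ⟨hmem.1.le, hmem.2.lt_of_ne hq⟩]
  rw [intervalIntegral.integral_congr_ae hsaw]
  split_ifs with hk
  · simp only [hk, Int.cast_zero, mul_zero, zero_mul, Complex.exp_zero, mul_one]
    rw [intervalIntegral.integral_ofReal, integral_id]
    push_cast
    ring
  · exact integral_ofReal_mul_cexp_neg_I_mul_intCast hk

theorem csC_mul_star_csC_mul_Nw {w : ℝ → ℝ} {p : ℝ} (hN : 0 < Nw w p) {m : ℤ}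
    (hwm : 0 ≤ w (p - m)) (n : ℤ) (q : ℝ) :
    csC w p q m * star (csC w p q n) * (Nw w p : ℂ) =
      Real.sqrt (w (p - m) * w (p - n)) * Complex.exp (-Complex.I * (m - n : ℤ) * q) := by
  have hstar : star (csC w p q n) =
      ((Real.sqrt (Nw w p))⁻¹ * Real.sqrt (w (p - n)) : ℝ) * Complex.exp (Complex.I * n * q) := by
    simp only [csC, star_mul', Complex.star_def, Complex.conj_ofReal, ← Complex.exp_conj,
      map_mul, map_neg, Complex.conj_I, map_intCast, neg_mul, neg_neg]
  have hexp : Complex.exp (-Complex.I * (m - n : ℤ) * q) =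
      Complex.exp (-Complex.I * m * q) * Complex.exp (Complex.I * n * q) := by
    rw [← Complex.exp_add]
    push_cast
    ring_nf
  have hsqrt : ((Real.sqrt (Nw w p))⁻¹ * Real.sqrt (w (p - m))) *
      ((Real.sqrt (Nw w p))⁻¹ * Real.sqrt (w (p - n))) * Nw w p =
        Real.sqrt (w (p - m) * w (p - n)) := by
    have hsN : Real.sqrt (Nw w p) ≠ 0 := by positivity
    rw [Real.sqrt_mul hwm]
    field_simp
    rw [Real.sq_sqrt hN.le]
    ring
  rw [hstar, csC, hexp, ← hsqrt]
  push_cast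
  ring

theorem integral_saw_mul_csC_mul_star_csC {w : ℝ → ℝ} {p : ℝ} (hN : 0 < Nw w p) {m : ℤ}
    (hwm : 0 ≤ w (p - m)) (n : ℤ) :
    ∫ q in (0 : ℝ)..(2 * π),
        (saw q : ℂ) * csC w p q m * star (csC w p q n) * (Nw w p : ℝ) / (2 * π : ℝ) =
      Real.sqrt (w (p - m) * w (p - n)) *
        (if m = n then (π : ℂ) else Complex.I / ((m : ℂ) - (n : ℂ))) := by
  have hintegrand : ∀ q : ℝ,
      (saw q : ℂ) * csC w p q m * star (csC w p q n) * (Nw w p : ℝ) / (2 * π : ℝ) =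
        (saw q : ℂ) * Complex.exp (-Complex.I * (m - n : ℤ) * q) *
          (Real.sqrt (w (p - m) * w (p - n)) / (2 * π : ℝ)) := fun q => by
    linear_combination (saw q : ℂ) / (2 * π : ℝ) * csC_mul_star_csC_mul_Nw hN hwm n q
  simp only [hintegrand, intervalIntegral.integral_mul_const,
    integral_saw_mul_cexp_neg_I_mul_intCast, sub_eq_zero]
  have hπ : (π : ℂ) ≠ 0 := Complex.ofReal_ne_zero.2 Real.pi_ne_zero
  split_ifs with hmn
  · push_cast
    field_simp
  · have hmn' : (m : ℂ) - n ≠ 0 := sub_ne_zero.2 (Int.cast_injective.ne hmn)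
    push_cast
    field_simp

theorem integral_sqrt_mul_le_half_add {α : Type*} [MeasurableSpace α] {μ : Measure α}
    {f g : α → ℝ} (hf0 : ∀ x, 0 ≤ f x) (hg0 : ∀ x, 0 ≤ g x) (hf : Integrable f μ)
    (hg : Integrable g μ) :
    ∫ x, Real.sqrt (f x * g x) ∂μ ≤ ((∫ x, f x ∂μ) + ∫ x, g x ∂μ) / 2 := by
  have hamgm : ∀ x, Real.sqrt (f x * g x) ≤ (f x + g x) / 2 := fun x => by
    rw [Real.sqrt_mul (hf0 x)]
    nlinarith [sq_nonneg (Real.sqrt (f x) - Real.sqrt (g x)), Real.sq_sqrt (hf0 x),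
      Real.sq_sqrt (hg0 x)]
  rw [← integral_add hf hg, ← integral_div]
  exact integral_mono_of_nonneg (.of_forall fun x => Real.sqrt_nonneg _)
    ((hf.add hg).div_const 2) (.of_forall hamgm)

section Overlap

variable {w : ℝ → ℝ}

theorem wOv_self (hw0 : ∀ p, 0 ≤ w p) (hw1 : ∫ p : ℝ, w p = 1) (m : ℤ) : wOv w m m = 1 := by
  simp only [wOv, Real.sqrt_mul_self (hw0 _), integral_sub_right_eq_self w, hw1]

theorem wOv_le_one (hw0 : ∀ p, 0 ≤ w p) (hwint : Integrable w) (hw1 : ∫ p : ℝ, w p = 1)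
    (m n : ℤ) : wOv w m n ≤ 1 := by
  have h := integral_sqrt_mul_le_half_add (fun p => hw0 (p - m)) (fun p => hw0 (p - n))
    (hwint.comp_sub_right m) (hwint.comp_sub_right n)
  simp only [integral_sub_right_eq_self w, hw1] at h
  rw [wOv]
  linarith

end Overlap

theorem circle_CS_quantisation_of_angle_general
    (w : ℝ → ℝ) (hw0 : ∀ p, 0 ≤ w p) (hwint : Integrable w)
    (hw1 : (∫ p : ℝ, w p) = 1)
    (hNpos : ∀ p : ℝ, 0 < Nw w p) :
    (∀ m n : ℤ,
      (∫ p : ℝ, ∫ q in (0:ℝ)..(2 * π),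
          (saw q : ℂ) * csC w p q m * star (csC w p q n) * (Nw w p : ℝ) / (2 * π : ℝ)) =
        if m = n then (π : ℂ) else Complex.I * (wOv w m n : ℝ) / ((m : ℂ) - (n : ℂ))) ∧
    (∀ m n : ℤ, wOv w m n ≤ 1) := by
  refine ⟨fun m n => ?_, wOv_le_one hw0 hwint hw1⟩
  simp only [integral_saw_mul_csC_mul_star_csC (hNpos _) (hw0 _), integral_mul_const,
    integral_complex_ofReal, ← wOv.eq_1]
  split_ifs with hmn
  · rw [hmn, wOv_self hw0 hw1, Complex.ofReal_one, one_mul]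
  · ring

/-- Matrix elements of the coherent-state quantisation of the sawtooth angle
function: `(A_a)_{mn} = π δ_{mn} + (1 − δ_{mn}) i w_{m,n}/(m−n)`; moreover
`w_{m,n} ≤ 1` by the Cauchy–Schwarz inequality, so `A_a` is bounded self-adjoint. -/
theorem circle_CS_quantisation_of_angle
    (w : ℝ → ℝ) (hw0 : ∀ p, 0 ≤ w p) (hwint : Integrable w)
    (hw1 : (∫ p : ℝ, w p) = 1)
    (hsum : ∀ p : ℝ, Summable fun n : ℤ => w (p - n))
    (hNpos : ∀ p : ℝ, 0 < Nw w p) :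
    (∀ m n : ℤ,
      (∫ p : ℝ, ∫ q in (0:ℝ)..(2 * π),
          (saw q : ℂ) * csC w p q m * star (csC w p q n) * (Nw w p : ℝ) / (2 * π : ℝ)) =
        if m = n then (π : ℂ) else Complex.I * (wOv w m n : ℝ) / ((m : ℂ) - (n : ℂ))) ∧
    (∀ m n : ℤ, wOv w m n ≤ 1) :=
  circle_CS_quantisation_of_angle_general w hw0 hwint hw1 hNpos
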